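/- On the Cartan group, the composition of d_c^{(3)}: E_0^3 → E_0^4 with d_c^{(4)}: E_0^4 → E_0^5 vanishes: the operator row vector (-X_2, X_1) composed with the 2×3 matrix [[(X_1X_2 + X_3)X_2 - X_5, √2(-X_1²X_2 + X_4), X_1³], [X_2³, -√2(X_2²X_1 + X_5), X_2X_1² - X_3X_1 + X_4]] gives the zero 1×3 matrix of differential operators. Explicitly, -X_2((X_1X_2 + X_3)X_2 - X_5) + X_1X_2³ = 0, -X_2√2(-X_1²X_2 + X_4) + X_1(-√2)(X_2²X_1 + X_5) = 0, and -X_2X_1³ + X_1(X_2X_1² - X_3X_1 + X_4) = 0. -/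

import Mathlib

noncomputable section

/-- Points of the Cartan group, identified with `ℝ^5`. -/
abbrev Pt : Type := Fin 5 → ℝ

/-- Partial derivative in the `i`-th coordinate direction. -/
noncomputable def pd (i : Fin 5) (f : Pt → ℝ) : Pt → ℝ :=
  fun x => fderiv ℝ f x (Pi.single i 1)

/-- `X₁ = ∂₁`. -/
noncomputable def X1 (f : Pt → ℝ) : Pt → ℝ := pd 0 f

/-- `X₂ = ∂₂ + x₁∂₃ + (x₁²/2)∂₄ + x₁x₂∂₅`. -/
noncomputable def X2 (f : Pt → ℝ) : Pt → ℝ :=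
  fun x => pd 1 f x + x 0 * pd 2 f x + (x 0) ^ 2 / 2 * pd 3 f x + x 0 * x 1 * pd 4 f x

/-- `X₃ = ∂₃ + x₁∂₄ + x₂∂₅`. -/
noncomputable def X3 (f : Pt → ℝ) : Pt → ℝ :=
  fun x => pd 2 f x + x 0 * pd 3 f x + x 1 * pd 4 f x

/-- `X₄ = ∂₄`. -/
noncomputable def X4 (f : Pt → ℝ) : Pt → ℝ := pd 3 f

/-- `X₅ = ∂₅`. -/
noncomputable def X5 (f : Pt → ℝ) : Pt → ℝ := pd 4 f
/-- The Rumin differential `d_c^{(1)} : E₀¹ → E₀²` of the Cartan group,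
as a 3×2 matrix of third-order left-invariant differential operators. -/
noncomputable def dc1 : Fin 3 → Fin 2 → (Pt → ℝ) → Pt → ℝ :=
  ![![fun u x => -(X1 (X1 (X2 u)) x) - X1 (X3 u) x - X4 u x,
     fun u x => X1 (X1 (X1 u)) x],
    ![fun u x => -Real.sqrt 2 * (X1 (X2 (X2 u)) x + X5 u x),
     fun u x => Real.sqrt 2 * (X2 (X1 (X1 u)) x - X4 u x)],
    ![fun u x => -(X2 (X2 (X2 u)) x),
     fun u x => X2 (X2 (X1 u)) x - X2 (X3 u) x - X5 u x]]

/-- The Rumin differential `d_c^{(2)} : E₀² → E₀³` of the Cartan group,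
as a 3×3 matrix of second-order left-invariant differential operators. -/
noncomputable def dc2 : Fin 3 → Fin 3 → (Pt → ℝ) → Pt → ℝ :=
  ![![fun u x => -(X1 (X2 u) x) - X3 u x,
     fun u x => (1 / Real.sqrt 2) * X1 (X1 u) x,
     fun _ _ => 0],
    ![fun u x => -(1 / Real.sqrt 2) * X2 (X2 u) x,
     fun u x => -(3 / 2) * X3 u x,
     fun u x => (1 / Real.sqrt 2) * X1 (X1 u) x],
    ![fun _ _ => 0,
     fun u x => -(1 / Real.sqrt 2) * X2 (X2 u) x,
     fun u x => X2 (X1 u) x - X3 u x]]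

/-- The Rumin differential `d_c^{(3)} : E₀³ → E₀⁴` of the Cartan group,
as a 2×3 matrix of third-order left-invariant differential operators. -/
noncomputable def dc3 : Fin 2 → Fin 3 → (Pt → ℝ) → Pt → ℝ :=
  ![![fun u x => X1 (X2 (X2 u)) x + X3 (X2 u) x - X5 u x,
     fun u x => Real.sqrt 2 * (-(X1 (X1 (X2 u)) x) + X4 u x),
     fun u x => X1 (X1 (X1 u)) x],
    ![fun u x => X2 (X2 (X2 u)) x,
     fun u x => -Real.sqrt 2 * (X2 (X2 (X1 u)) x + X5 u x),
     fun u x => X2 (X1 (X1 u)) x - X3 (X1 u) x + X4 u x]]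
lemma contDiff_pd {f : Pt → ℝ} (hf : ContDiff ℝ (⊤ : ℕ∞) f) (i : Fin 5) : ContDiff ℝ (⊤ : ℕ∞) (pd i f) := by
  exact (hf.fderiv_right (m := (⊤ : ℕ∞)) (by simp)).clm_apply contDiff_const
lemma diffAt_pd {f : Pt → ℝ} (hf : ContDiff ℝ (⊤ : ℕ∞) f) (i : Fin 5) {x : Pt} :
    DifferentiableAt ℝ (pd i f) x :=
  ((contDiff_pd hf i).differentiable (by simp)).differentiableAt
lemma diffAt_coord (j : Fin 5) {x : Pt} : DifferentiableAt ℝ (fun y : Pt => y j) x :=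
  (differentiable_pi.mp differentiable_id j).differentiableAt
lemma contDiff_coord (j : Fin 5) : ContDiff ℝ (⊤ : ℕ∞) (fun y : Pt => y j) :=
  (ContinuousLinearMap.proj j : Pt →L[ℝ] ℝ).contDiff
lemma pd_add {f g : Pt → ℝ} {x : Pt} (i : Fin 5) (hf : DifferentiableAt ℝ f x)
    (hg : DifferentiableAt ℝ g x) :
    pd i (fun y => f y + g y) x = pd i f x + pd i g x := by
  unfold pd; rw [fderiv_fun_add hf hg]; simp
lemma pd_mul {f g : Pt → ℝ} {x : Pt} (i : Fin 5) (hf : DifferentiableAt ℝ f x)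
    (hg : DifferentiableAt ℝ g x) :
    pd i (fun y => f y * g y) x = pd i f x * g x + f x * pd i g x := by
  unfold pd; rw [fderiv_fun_mul hf hg]; simp; ring
lemma pd_const_mul {f : Pt → ℝ} {x : Pt} (i : Fin 5) (c : ℝ) (hf : DifferentiableAt ℝ f x) :
    pd i (fun y => c * f y) x = c * pd i f x := by
  unfold pd; rw [fderiv_const_mul hf]; simp
lemma pd_coord (i j : Fin 5) (x : Pt) : pd i (fun y : Pt => y j) x = if j = i then 1 else 0 := by
  unfold pd
  have h : (fun y : Pt => y j) = (ContinuousLinearMap.proj j : Pt →L[ℝ] ℝ) := rfl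
  rw [h, ContinuousLinearMap.fderiv]
  simp [Pi.single_apply]
lemma pd_comm {f : Pt → ℝ} (hf : ContDiff ℝ (⊤ : ℕ∞) f) (i j : Fin 5) (x : Pt) :
    pd i (pd j f) x = pd j (pd i f) x := by
  have hdf : ∀ y, HasFDerivAt f (fderiv ℝ f y) y := fun y =>
    (hf.differentiable (by simp) y).hasFDerivAt
  have h2 : DifferentiableAt ℝ (fderiv ℝ f) x :=
    ((hf.fderiv_right (m := 1) (WithTop.coe_le_coe.mpr le_top)).differentiable one_ne_zero) x
  have key : ∀ a b : Fin 5, pd a (pd b f) x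
      = fderiv ℝ (fderiv ℝ f) x (Pi.single a 1) (Pi.single b 1) := by
    intro a b
    show fderiv ℝ (fun y => fderiv ℝ f y (Pi.single b 1)) x (Pi.single a 1) = _
    rw [fderiv_clm_apply h2 (differentiableAt_const _)]
    simp
  rw [key, key]
  exact second_derivative_symmetric hdf h2.hasFDerivAt _ _

-- derivative of (y 0)^2/2
lemma pd_sq (i : Fin 5) (x : Pt) :
    pd i (fun y : Pt => (y 0) ^ 2 / 2) x = (if (0:Fin 5) = i then 1 else 0) * x 0 := by
  have h : (fun y : Pt => (y 0) ^ 2 / 2) = fun y : Pt => y 0 * ((1/2 : ℝ) * y 0) := by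
    funext y; ring
  rw [h, pd_mul i (diffAt_coord 0) ((diffAt_coord 0).const_mul _),
    pd_const_mul i _ (diffAt_coord 0), pd_coord]
  ring

lemma diffAt_sq {x : Pt} : DifferentiableAt ℝ (fun y : Pt => (y 0) ^ 2 / 2) x := by
  have h : (fun y : Pt => (y 0) ^ 2 / 2) = fun y : Pt => y 0 * ((1/2 : ℝ) * y 0) := by
    funext y; ring
  rw [h]
  exact (diffAt_coord 0).mul ((diffAt_coord 0).const_mul _)

lemma contDiff_X1 {f : Pt → ℝ} (hf : ContDiff ℝ (⊤ : ℕ∞) f) : ContDiff ℝ (⊤ : ℕ∞) (X1 f) := contDiff_pd hf 0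
lemma contDiff_X4 {f : Pt → ℝ} (hf : ContDiff ℝ (⊤ : ℕ∞) f) : ContDiff ℝ (⊤ : ℕ∞) (X4 f) := contDiff_pd hf 3
lemma contDiff_X5 {f : Pt → ℝ} (hf : ContDiff ℝ (⊤ : ℕ∞) f) : ContDiff ℝ (⊤ : ℕ∞) (X5 f) := contDiff_pd hf 4
lemma contDiff_X2 {f : Pt → ℝ} (hf : ContDiff ℝ (⊤ : ℕ∞) f) : ContDiff ℝ (⊤ : ℕ∞) (X2 f) := by
  unfold X2
  exact (((contDiff_pd hf 1).add ((contDiff_coord 0).mul (contDiff_pd hf 2))).add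
    ((((contDiff_coord 0).pow 2).div_const 2).mul (contDiff_pd hf 3))).add
    (((contDiff_coord 0).mul (contDiff_coord 1)).mul (contDiff_pd hf 4))
lemma contDiff_X3 {f : Pt → ℝ} (hf : ContDiff ℝ (⊤ : ℕ∞) f) : ContDiff ℝ (⊤ : ℕ∞) (X3 f) := by
  unfold X3
  exact ((contDiff_pd hf 2).add ((contDiff_coord 0).mul (contDiff_pd hf 3))).add
    ((contDiff_coord 1).mul (contDiff_pd hf 4))

lemma pd_X2 {f : Pt → ℝ} (hf : ContDiff ℝ (⊤ : ℕ∞) f) (i : Fin 5) (x : Pt) :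
    pd i (X2 f) x =
      pd i (pd 1 f) x
      + ((if (0:Fin 5) = i then 1 else 0) * pd 2 f x + x 0 * pd i (pd 2 f) x)
      + (((if (0:Fin 5) = i then 1 else 0) * x 0) * pd 3 f x + (x 0) ^ 2 / 2 * pd i (pd 3 f) x)
      + (((if (0:Fin 5) = i then 1 else 0) * x 1
          + x 0 * (if (1:Fin 5) = i then 1 else 0)) * pd 4 f x
         + x 0 * x 1 * pd i (pd 4 f) x) := by
  unfold X2
  have d1 : DifferentiableAt ℝ (pd 1 f) x := diffAt_pd hf 1
  have d2 : DifferentiableAt ℝ (fun y : Pt => y 0 * pd 2 f y) x :=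
    (diffAt_coord 0).mul (diffAt_pd hf 2)
  have d3 : DifferentiableAt ℝ (fun y : Pt => (y 0) ^ 2 / 2 * pd 3 f y) x :=
    diffAt_sq.mul (diffAt_pd hf 3)
  have d01 : DifferentiableAt ℝ (fun y : Pt => y 0 * y 1) x :=
    (diffAt_coord 0).mul (diffAt_coord 1)
  have d4 : DifferentiableAt ℝ (fun y : Pt => y 0 * y 1 * pd 4 f y) x :=
    d01.mul (diffAt_pd hf 4)
  rw [pd_add i ((d1.fun_add d2).fun_add d3) d4, pd_add i (d1.fun_add d2) d3, pd_add i d1 d2,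
    pd_mul i (diffAt_coord 0) (diffAt_pd hf 2),
    pd_mul i diffAt_sq (diffAt_pd hf 3),
    pd_mul i d01 (diffAt_pd hf 4),
    pd_mul i (diffAt_coord 0) (diffAt_coord 1),
    pd_coord, pd_coord, pd_sq]

lemma pd_X3 {f : Pt → ℝ} (hf : ContDiff ℝ (⊤ : ℕ∞) f) (i : Fin 5) (x : Pt) :
    pd i (X3 f) x =
      pd i (pd 2 f) x
      + ((if (0:Fin 5) = i then 1 else 0) * pd 3 f x + x 0 * pd i (pd 3 f) x)
      + ((if (1:Fin 5) = i then 1 else 0) * pd 4 f x + x 1 * pd i (pd 4 f) x) := by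
  unfold X3
  have d2 : DifferentiableAt ℝ (pd 2 f) x := diffAt_pd hf 2
  have d3 : DifferentiableAt ℝ (fun y : Pt => y 0 * pd 3 f y) x :=
    (diffAt_coord 0).mul (diffAt_pd hf 3)
  have d4 : DifferentiableAt ℝ (fun y : Pt => y 1 * pd 4 f y) x :=
    (diffAt_coord 1).mul (diffAt_pd hf 4)
  rw [pd_add i (d2.fun_add d3) d4, pd_add i d2 d3,
    pd_mul i (diffAt_coord 0) (diffAt_pd hf 3),
    pd_mul i (diffAt_coord 1) (diffAt_pd hf 4),
    pd_coord, pd_coord]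

variable {u f g : Pt → ℝ}

lemma comm12 (hf : ContDiff ℝ (⊤ : ℕ∞) f) (x : Pt) : X1 (X2 f) x = X2 (X1 f) x + X3 f x := by
  simp only [X1, X2, X3]
  rw [pd_X2 hf 0 x, pd_comm hf 1 0 x, pd_comm hf 2 0 x, pd_comm hf 3 0 x, pd_comm hf 4 0 x]
  simp only [show ((0:Fin 5)=0) = True by decide, show ((1:Fin 5)=1) = True by decide,
    show ((0:Fin 5)=1) = False by decide, show ((1:Fin 5)=0) = False by decide, show ((0:Fin 5)=2) = False by decide,
    show ((0:Fin 5)=3) = False by decide, show ((0:Fin 5)=4) = False by decide,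
    show ((1:Fin 5)=2) = False by decide, show ((1:Fin 5)=3) = False by decide,
    show ((1:Fin 5)=4) = False by decide, if_true, if_false]
  ring

lemma comm13 (hf : ContDiff ℝ (⊤ : ℕ∞) f) (x : Pt) : X1 (X3 f) x = X3 (X1 f) x + X4 f x := by
  simp only [X1, X3, X4]
  rw [pd_X3 hf 0 x, pd_comm hf 2 0 x, pd_comm hf 3 0 x, pd_comm hf 4 0 x]
  simp only [show ((0:Fin 5)=0) = True by decide, show ((1:Fin 5)=1) = True by decide,
    show ((0:Fin 5)=1) = False by decide, show ((1:Fin 5)=0) = False by decide, show ((0:Fin 5)=2) = False by decide,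
    show ((0:Fin 5)=3) = False by decide, show ((0:Fin 5)=4) = False by decide,
    show ((1:Fin 5)=2) = False by decide, show ((1:Fin 5)=3) = False by decide,
    show ((1:Fin 5)=4) = False by decide, if_true, if_false]
  ring

lemma comm23 (hf : ContDiff ℝ (⊤ : ℕ∞) f) (x : Pt) : X2 (X3 f) x = X3 (X2 f) x + X5 f x := by
  simp only [X2, X3, X5]
  rw [pd_X3 hf 1 x, pd_X3 hf 2 x, pd_X3 hf 3 x, pd_X3 hf 4 x,
    pd_X2 hf 2 x, pd_X2 hf 3 x, pd_X2 hf 4 x,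
    pd_comm hf 2 1 x, pd_comm hf 3 1 x, pd_comm hf 4 1 x,
    pd_comm hf 3 2 x, pd_comm hf 4 2 x, pd_comm hf 4 3 x]
  simp only [show ((0:Fin 5)=0) = True by decide, show ((1:Fin 5)=1) = True by decide,
    show ((0:Fin 5)=1) = False by decide, show ((1:Fin 5)=0) = False by decide, show ((0:Fin 5)=2) = False by decide,
    show ((0:Fin 5)=3) = False by decide, show ((0:Fin 5)=4) = False by decide,
    show ((1:Fin 5)=2) = False by decide, show ((1:Fin 5)=3) = False by decide,
    show ((1:Fin 5)=4) = False by decide, if_true, if_false]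
  ring

lemma comm14 (hf : ContDiff ℝ (⊤ : ℕ∞) f) (x : Pt) : X1 (X4 f) x = X4 (X1 f) x := by
  simp only [X1, X4]; exact pd_comm hf 0 3 x

lemma comm24 (hf : ContDiff ℝ (⊤ : ℕ∞) f) (x : Pt) : X2 (X4 f) x = X4 (X2 f) x := by
  simp only [X2, X4]
  rw [pd_X2 hf 3 x, pd_comm hf 3 1 x, pd_comm hf 3 2 x, pd_comm hf 4 3 x]
  simp only [show ((0:Fin 5)=0) = True by decide, show ((1:Fin 5)=1) = True by decide,
    show ((0:Fin 5)=1) = False by decide, show ((1:Fin 5)=0) = False by decide, show ((0:Fin 5)=2) = False by decide,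
    show ((0:Fin 5)=3) = False by decide, show ((0:Fin 5)=4) = False by decide,
    show ((1:Fin 5)=2) = False by decide, show ((1:Fin 5)=3) = False by decide,
    show ((1:Fin 5)=4) = False by decide, if_true, if_false]
  ring

lemma comm25 (hf : ContDiff ℝ (⊤ : ℕ∞) f) (x : Pt) : X2 (X5 f) x = X5 (X2 f) x := by
  simp only [X2, X5]
  rw [pd_X2 hf 4 x, pd_comm hf 4 1 x, pd_comm hf 4 2 x, pd_comm hf 4 3 x]
  simp only [show ((0:Fin 5)=0) = True by decide, show ((1:Fin 5)=1) = True by decide,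
    show ((0:Fin 5)=1) = False by decide, show ((1:Fin 5)=0) = False by decide, show ((0:Fin 5)=2) = False by decide,
    show ((0:Fin 5)=3) = False by decide, show ((0:Fin 5)=4) = False by decide,
    show ((1:Fin 5)=2) = False by decide, show ((1:Fin 5)=3) = False by decide,
    show ((1:Fin 5)=4) = False by decide, if_true, if_false]
  ring

lemma pd_linear3 {h : Pt → ℝ} {x : Pt} (i : Fin 5) (a b c : ℝ)
    (hf : DifferentiableAt ℝ f x) (hg : DifferentiableAt ℝ g x)
    (hh : DifferentiableAt ℝ h x) :
    pd i (fun y => a * f y + b * g y + c * h y) x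
      = a * pd i f x + b * pd i g x + c * pd i h x := by
  rw [pd_add i ((hf.const_mul a).fun_add (hg.const_mul b)) (hh.const_mul c),
    pd_add i (hf.const_mul a) (hg.const_mul b),
    pd_const_mul i a hf, pd_const_mul i b hg, pd_const_mul i c hh]

lemma X1_linear3 {h : Pt → ℝ} (a b c : ℝ)
    (hf : ContDiff ℝ (⊤ : ℕ∞) f) (hg : ContDiff ℝ (⊤ : ℕ∞) g) (hh : ContDiff ℝ (⊤ : ℕ∞) h) (x : Pt) :
    X1 (fun y => a * f y + b * g y + c * h y) x = a * X1 f x + b * X1 g x + c * X1 h x := by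
  simp only [X1]
  exact pd_linear3 0 a b c ((hf.differentiable (by simp)).differentiableAt)
    ((hg.differentiable (by simp)).differentiableAt) ((hh.differentiable (by simp)).differentiableAt)

lemma X2_linear3 {h : Pt → ℝ} (a b c : ℝ)
    (hf : ContDiff ℝ (⊤ : ℕ∞) f) (hg : ContDiff ℝ (⊤ : ℕ∞) g) (hh : ContDiff ℝ (⊤ : ℕ∞) h) (x : Pt) :
    X2 (fun y => a * f y + b * g y + c * h y) x = a * X2 f x + b * X2 g x + c * X2 h x := by
  have df : ∀ {y : Pt}, DifferentiableAt ℝ f y := fun {y} => (hf.differentiable (by simp)).differentiableAt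
  have dg : ∀ {y : Pt}, DifferentiableAt ℝ g y := fun {y} => (hg.differentiable (by simp)).differentiableAt
  have dh : ∀ {y : Pt}, DifferentiableAt ℝ h y := fun {y} => (hh.differentiable (by simp)).differentiableAt
  simp only [X2]
  rw [pd_linear3 1 a b c df dg dh, pd_linear3 2 a b c df dg dh,
    pd_linear3 3 a b c df dg dh, pd_linear3 4 a b c df dg dh]
  ring


lemma part_b (hu : ContDiff ℝ (⊤ : ℕ∞) u) (x : Pt) :
    -(X2 (fun y => X1 (X2 (X2 u)) y + X3 (X2 u) y - X5 u y)) x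
      + X1 (X2 (X2 (X2 u))) x = 0 := by
  have s2 : ContDiff ℝ (⊤ : ℕ∞) (X2 u) := contDiff_X2 hu
  have s22 : ContDiff ℝ (⊤ : ℕ∞) (X2 (X2 u)) := contDiff_X2 s2
  have hG : (fun y => X1 (X2 (X2 u)) y + X3 (X2 u) y - X5 u y)
      = fun y => 1 * X1 (X2 (X2 u)) y + 1 * X3 (X2 u) y + (-1) * X5 u y := by
    funext y; ring
  rw [hG, X2_linear3 1 1 (-1) (contDiff_X1 s22) (contDiff_X3 s2) (contDiff_X5 hu) x]
  have c1 := comm12 s22 x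
  have c2 := comm23 s2 x
  have c3 := comm25 hu x
  linarith

lemma part_c (hu : ContDiff ℝ (⊤ : ℕ∞) u) (x : Pt) :
    -(X2 (fun y => Real.sqrt 2 * (-(X1 (X1 (X2 u)) y) + X4 u y))) x
      + X1 (fun y => -Real.sqrt 2 * (X2 (X2 (X1 u)) y + X5 u y)) x = 0 := by
  have s2 : ContDiff ℝ (⊤ : ℕ∞) (X2 u) := contDiff_X2 hu
  have s12 : ContDiff ℝ (⊤ : ℕ∞) (X1 (X2 u)) := contDiff_X1 s2
  have s112 : ContDiff ℝ (⊤ : ℕ∞) (X1 (X1 (X2 u))) := contDiff_X1 s12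
  have s3 : ContDiff ℝ (⊤ : ℕ∞) (X3 u) := contDiff_X3 hu
  have hfun : X2 (X1 u) = fun y => X1 (X2 u) y - X3 u y :=
    funext fun y => by have := comm12 hu y; linarith
  have hfun2 : X2 (fun y => X1 (X2 u) y - X3 u y)
      = fun y => X2 (X1 (X2 u)) y - X2 (X3 u) y := by
    funext y
    have h : (fun y => X1 (X2 u) y - X3 u y)
        = fun y => 1 * X1 (X2 u) y + (-1) * X3 u y + 0 * X3 u y := by funext z; ring
    rw [h, X2_linear3 1 (-1) 0 s12 s3 s3 y]; ring
  rw [hfun, hfun2]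
  have hA : (fun y => Real.sqrt 2 * (-(X1 (X1 (X2 u)) y) + X4 u y))
      = fun y => (-Real.sqrt 2) * X1 (X1 (X2 u)) y + Real.sqrt 2 * X4 u y
          + 0 * X4 u y := by funext y; ring
  have hB : (fun y => -Real.sqrt 2 * (X2 (X1 (X2 u)) y - X2 (X3 u) y + X5 u y))
      = fun y => (-Real.sqrt 2) * X2 (X1 (X2 u)) y + Real.sqrt 2 * X2 (X3 u) y
          + (-Real.sqrt 2) * X5 u y := by funext y; ring
  rw [hA, hB,
    X2_linear3 (-Real.sqrt 2) (Real.sqrt 2) 0 s112 (contDiff_X4 hu) (contDiff_X4 hu) x,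
    X1_linear3 (-Real.sqrt 2) (Real.sqrt 2) (-Real.sqrt 2) (contDiff_X2 s12)
      (contDiff_X2 s3) (contDiff_X5 hu) x]
  have hfun3 : X2 (X3 u) = fun y => X3 (X2 u) y + X5 u y :=
    funext fun y => comm23 hu y
  rw [hfun3]
  have hC : (fun y => X3 (X2 u) y + X5 u y)
      = fun y => 1 * X3 (X2 u) y + 1 * X5 u y + 0 * X5 u y := by funext y; ring
  rw [hC, X1_linear3 1 1 0 (contDiff_X3 s2) (contDiff_X5 hu) (contDiff_X5 hu) x]
  have c1 := comm12 s12 x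
  have c2 := comm24 hu x
  have c4 := comm13 s2 x
  linear_combination (-Real.sqrt 2) * c1 + (-Real.sqrt 2) * c2 + Real.sqrt 2 * c4

lemma part_d (hu : ContDiff ℝ (⊤ : ℕ∞) u) (x : Pt) :
    -(X2 (X1 (X1 (X1 u)))) x
      + X1 (fun y => X2 (X1 (X1 u)) y - X3 (X1 u) y + X4 u y) x = 0 := by
  have s1 : ContDiff ℝ (⊤ : ℕ∞) (X1 u) := contDiff_X1 hu
  have s11 : ContDiff ℝ (⊤ : ℕ∞) (X1 (X1 u)) := contDiff_X1 s1
  have hG : (fun y => X2 (X1 (X1 u)) y - X3 (X1 u) y + X4 u y)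
      = fun y => 1 * X2 (X1 (X1 u)) y + (-1) * X3 (X1 u) y + 1 * X4 u y := by
    funext y; ring
  rw [hG, X1_linear3 1 (-1) 1 (contDiff_X2 s11) (contDiff_X3 s1) (contDiff_X4 hu) x]
  have c1 := comm12 s11 x
  have c2 := comm13 s1 x
  have c3 := comm14 hu x
  linarith

/-- `d_c^{(4)} ∘ d_c^{(3)} = 0` on the Cartan group: composing the row operator
`(-X₂, X₁)` with the matrix of `d_c^{(3)}` gives the zero 1×3 matrix. -/
theorem stmt6 (u : Pt → ℝ) (hu : ContDiff ℝ (⊤ : ℕ∞) u) :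
    (∀ j : Fin 3, ∀ x : Pt, -(X2 (dc3 0 j u)) x + X1 (dc3 1 j u) x = 0) ∧
    (∀ x, -(X2 (fun y => X1 (X2 (X2 u)) y + X3 (X2 u) y - X5 u y)) x
        + X1 (X2 (X2 (X2 u))) x = 0) ∧
    (∀ x, -(X2 (fun y => Real.sqrt 2 * (-(X1 (X1 (X2 u)) y) + X4 u y))) x
        + X1 (fun y => -Real.sqrt 2 * (X2 (X2 (X1 u)) y + X5 u y)) x = 0) ∧
    (∀ x, -(X2 (X1 (X1 (X1 u)))) x
        + X1 (fun y => X2 (X1 (X1 u)) y - X3 (X1 u) y + X4 u y) x = 0) := by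
  refine ⟨?_, part_b hu, part_c hu, part_d hu⟩
  intro j
  fin_cases j <;>
    simp only [dc3, Matrix.cons_val', Matrix.cons_val_zero, Matrix.cons_val_one,
      Matrix.head_cons, Matrix.empty_val', Matrix.cons_val_fin_one, Matrix.cons_val_two,
      Matrix.tail_cons, Fin.isValue]
  · exact fun x => part_b hu x
  · exact fun x => part_c hu x
  · exact fun x => part_d hu x
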